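/- Let k ≥ 2 be an integer, P' = P'_{8·3^k} the presented group ⟨x, y, z ∣ x² = (xy)², (xy)² = y², z x z^{-1} = y, z y z^{-1} = x y, z^{3^k} = 1⟩, and ζ_n = e^{2πi/n}. For an integer s, let ς_s : P' → GL(3,ℂ) be a group homomorphism with ς_s(x) = [[-1,-1,-1],[0,0,1],[0,1,0]], ς_s(y) = [[0,0,1],[-1,-1,-1],[1,0,0]], and ς_s(z) = ζ_{3^k}^s · [[-1,-1,-1],[0,1,0],[1,0,0]]. Then the representation of P' on ℂ³ given by ς_s is irreducible, i.e. ℂ³ has no P'-invariant subspace other than 0 and ℂ³. -/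
import Mathlib


/-- The relations of the presented group
`P'_{8·3^k} = ⟨x, y, z ∣ x² = (xy)², (xy)² = y², z x z⁻¹ = y, z y z⁻¹ = x y, z^{3^k} = 1⟩`,
where `x` is the first generator, `y` the second and `z` the third one. -/
def Prels (k : ℕ) : Set (FreeGroup (Fin 3)) :=
  {FreeGroup.of 0 ^ 2 * ((FreeGroup.of 0 * FreeGroup.of 1) ^ 2)⁻¹,
   (FreeGroup.of 0 * FreeGroup.of 1) ^ 2 * (FreeGroup.of 1 ^ 2)⁻¹,
   FreeGroup.of 2 * FreeGroup.of 0 * (FreeGroup.of 2)⁻¹ * (FreeGroup.of 1)⁻¹,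
   FreeGroup.of 2 * FreeGroup.of 1 * (FreeGroup.of 2)⁻¹ *
     (FreeGroup.of 0 * FreeGroup.of 1)⁻¹,
   FreeGroup.of 2 ^ (3 ^ k)}

/-- The presented group `P'_{8·3^k}`. -/
abbrev PGroup (k : ℕ) : Type := PresentedGroup (Prels k)

/-- The generator `x` of `P'_{8·3^k}`. -/
noncomputable def Px (k : ℕ) : PGroup k := PresentedGroup.of 0

/-- The generator `y` of `P'_{8·3^k}`. -/
noncomputable def Py (k : ℕ) : PGroup k := PresentedGroup.of 1

/-- The generator `z` of `P'_{8·3^k}`. -/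
noncomputable def Pz (k : ℕ) : PGroup k := PresentedGroup.of 2

/-- `ζ_n = e^{2πi/n}`. -/
noncomputable def zeta (n : ℕ) : ℂ := Complex.exp (2 * Real.pi * Complex.I / n)

/-- `ω = ζ_3 = e^{2πi/3}`. -/
noncomputable def omg : ℂ := zeta 3

/-- If a subspace of `ℂ³` contains the three vectors `(-1,-1,1)`, `(1,-1,-1)`, `(1,-1,1)`
(which form a basis), it is everything. -/
lemma spanning_tuv (W : Submodule ℂ (Fin 3 → ℂ))
    (ht : (![-1, -1, 1] : Fin 3 → ℂ) ∈ W)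
    (hu : (![1, -1, -1] : Fin 3 → ℂ) ∈ W)
    (hv : (![1, -1, 1] : Fin 3 → ℂ) ∈ W) : W = ⊤ := by
  rw [Submodule.eq_top_iff']
  intro x
  have hx : x = (-(x 0) / 2 - x 1 / 2) • (![-1, -1, 1] : Fin 3 → ℂ)
      + (-(x 1) / 2 - x 2 / 2) • (![1, -1, -1] : Fin 3 → ℂ)
      + (x 0 / 2 + x 2 / 2) • (![1, -1, 1] : Fin 3 → ℂ) := by
    funext i
    fin_cases i <;> simp <;> ring
  rw [hx]
  exact W.add_mem (W.add_mem (W.smul_mem _ ht) (W.smul_mem _ hu)) (W.smul_mem _ hv)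

/-- For `k ≥ 2`, `P' = P'_{8·3^k}` and an integer `s`, any group homomorphism
`ς_s : P' → GL(3,ℂ)` with `ς_s(x) = [[-1,-1,-1],[0,0,1],[0,1,0]]`,
`ς_s(y) = [[0,0,1],[-1,-1,-1],[1,0,0]]` and
`ς_s(z) = ζ_{3^k}^s · [[-1,-1,-1],[0,1,0],[1,0,0]]` gives an irreducible representation
of `P'` on `ℂ³`: there is no `P'`-invariant subspace other than `0` and `ℂ³`. -/
theorem irreducible_three_dim_rep_PGroup (k : ℕ) (hk : 2 ≤ k) (s : ℤ)
    (ς : PGroup k →* Matrix.GeneralLinearGroup (Fin 3) ℂ)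
    (hx : (ς (Px k) : Matrix (Fin 3) (Fin 3) ℂ) = !![-1, -1, -1; 0, 0, 1; 0, 1, 0])
    (hy : (ς (Py k) : Matrix (Fin 3) (Fin 3) ℂ) = !![0, 0, 1; -1, -1, -1; 1, 0, 0])
    (hz : (ς (Pz k) : Matrix (Fin 3) (Fin 3) ℂ) =
        zeta (3 ^ k) ^ s • !![-1, -1, -1; 0, 1, 0; 1, 0, 0]) :
    ∀ W : Submodule ℂ (Fin 3 → ℂ),
      (∀ (g : PGroup k), ∀ w ∈ W, (ς g : Matrix (Fin 3) (Fin 3) ℂ).mulVec w ∈ W) →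
      W = ⊥ ∨ W = ⊤ := by
  intro W hW
  by_cases hbot : W = ⊥
  · exact Or.inl hbot
  right
  -- a nonzero vector of W
  obtain ⟨w, hwW, hw0⟩ : ∃ w ∈ W, w ≠ 0 := by
    by_contra h
    push_neg at h
    exact hbot ((Submodule.eq_bot_iff W).mpr h)
  -- invariance under the three matrices
  have hA : ∀ v ∈ W, (!![-1, -1, -1; 0, 0, 1; 0, 1, 0] : Matrix (Fin 3) (Fin 3) ℂ).mulVec v ∈ W := by
    intro v hv
    have := hW (Px k) v hv
    rwa [hx] at this
  have hB : ∀ v ∈ W, (!![0, 0, 1; -1, -1, -1; 1, 0, 0] : Matrix (Fin 3) (Fin 3) ℂ).mulVec v ∈ W := by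
    intro v hv
    have := hW (Py k) v hv
    rwa [hy] at this
  have hzne : zeta (3 ^ k) ^ s ≠ 0 := zpow_ne_zero s (Complex.exp_ne_zero _)
  have hM : ∀ v ∈ W, (!![-1, -1, -1; 0, 1, 0; 1, 0, 0] : Matrix (Fin 3) (Fin 3) ℂ).mulVec v ∈ W := by
    intro v hv
    have h1 := hW (Pz k) v hv
    rw [hz, Matrix.smul_mulVec] at h1
    have h2 := W.smul_mem (zeta (3 ^ k) ^ s)⁻¹ h1
    rwa [inv_smul_smul₀ hzne] at h2
  set a := w 0 with ha
  set b := w 1 with hb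
  set c := w 2 with hc
  -- M cycles t ↦ u ↦ v ↦ t
  have hMt : (!![-1, -1, -1; 0, 1, 0; 1, 0, 0] : Matrix (Fin 3) (Fin 3) ℂ).mulVec ![-1, -1, 1]
      = ![1, -1, -1] := by
    funext i; fin_cases i <;>
      simp [Matrix.mulVec, dotProduct, Fin.sum_univ_three] <;> ring
  have hMu : (!![-1, -1, -1; 0, 1, 0; 1, 0, 0] : Matrix (Fin 3) (Fin 3) ℂ).mulVec ![1, -1, -1]
      = ![1, -1, 1] := by
    funext i; fin_cases i <;>
      simp [Matrix.mulVec, dotProduct, Fin.sum_univ_three] <;> ring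
  have hMv : (!![-1, -1, -1; 0, 1, 0; 1, 0, 0] : Matrix (Fin 3) (Fin 3) ℂ).mulVec ![1, -1, 1]
      = ![-1, -1, 1] := by
    funext i; fin_cases i <;>
      simp [Matrix.mulVec, dotProduct, Fin.sum_univ_three] <;> ring
  -- from any one of t, u, v in W, all three are in W, hence W = ⊤
  have top_of_t : (![-1, -1, 1] : Fin 3 → ℂ) ∈ W → W = ⊤ := by
    intro ht
    have hu := hM _ ht; rw [hMt] at hu
    have hv := hM _ hu; rw [hMu] at hv
    exact spanning_tuv W ht hu hv
  have top_of_u : (![1, -1, -1] : Fin 3 → ℂ) ∈ W → W = ⊤ := by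
    intro hu
    have hv := hM _ hu; rw [hMu] at hv
    have ht := hM _ hv; rw [hMv] at ht
    exact spanning_tuv W ht hu hv
  have top_of_v : (![1, -1, 1] : Fin 3 → ℂ) ∈ W → W = ⊤ := by
    intro hv
    have ht := hM _ hv; rw [hMv] at ht
    have hu := hM _ ht; rw [hMt] at hu
    exact spanning_tuv W ht hu hv
  -- the three rank-one combinations
  have hAw := hA w hwW
  have hBw := hB w hwW
  have hABw := hA _ hBw
  have comb1 : (!![-1, -1, -1; 0, 0, 1; 0, 1, 0] : Matrix (Fin 3) (Fin 3) ℂ).mulVec w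
      + (!![0, 0, 1; -1, -1, -1; 1, 0, 0] : Matrix (Fin 3) (Fin 3) ℂ).mulVec w
      = (a + b) • ![-1, -1, 1] := by
    funext i; fin_cases i <;>
      simp [Matrix.mulVec, dotProduct, Fin.sum_univ_three, ← ha, ← hb, ← hc] <;> ring
  have comb2 : (!![-1, -1, -1; 0, 0, 1; 0, 1, 0] : Matrix (Fin 3) (Fin 3) ℂ).mulVec
        ((!![0, 0, 1; -1, -1, -1; 1, 0, 0] : Matrix (Fin 3) (Fin 3) ℂ).mulVec w)
      + (!![0, 0, 1; -1, -1, -1; 1, 0, 0] : Matrix (Fin 3) (Fin 3) ℂ).mulVec w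
      = (b + c) • ![1, -1, -1] := by
    funext i; fin_cases i <;>
      simp [Matrix.mulVec, dotProduct, Fin.sum_univ_three, ← ha, ← hb, ← hc] <;> ring
  have comb3 : (!![-1, -1, -1; 0, 0, 1; 0, 1, 0] : Matrix (Fin 3) (Fin 3) ℂ).mulVec
        ((!![0, 0, 1; -1, -1, -1; 1, 0, 0] : Matrix (Fin 3) (Fin 3) ℂ).mulVec w)
      + (!![-1, -1, -1; 0, 0, 1; 0, 1, 0] : Matrix (Fin 3) (Fin 3) ℂ).mulVec w
      = (-(a + c)) • ![1, -1, 1] := by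
    funext i; fin_cases i <;>
      simp [Matrix.mulVec, dotProduct, Fin.sum_univ_three, ← ha, ← hb, ← hc] <;> ring
  have m1 : (a + b) • (![-1, -1, 1] : Fin 3 → ℂ) ∈ W := comb1 ▸ W.add_mem hAw hBw
  have m2 : (b + c) • (![1, -1, -1] : Fin 3 → ℂ) ∈ W := comb2 ▸ W.add_mem hABw hBw
  have m3 : (-(a + c)) • (![1, -1, 1] : Fin 3 → ℂ) ∈ W := comb3 ▸ W.add_mem hABw hAw
  -- not all of a+b, b+c, a+c vanish
  by_cases h1 : a + b = 0
  · by_cases h2 : b + c = 0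
    · by_cases h3 : a + c = 0
      · exfalso
        apply hw0
        funext i
        fin_cases i
        · show a = 0; linear_combination (h1 + h3 - h2) / 2
        · show b = 0; linear_combination (h1 + h2 - h3) / 2
        · show c = 0; linear_combination (h2 + h3 - h1) / 2
      · apply top_of_v
        have := W.smul_mem (-(a + c))⁻¹ m3
        rwa [inv_smul_smul₀ (neg_ne_zero.mpr h3)] at this
    · apply top_of_u
      have := W.smul_mem (b + c)⁻¹ m2
      rwa [inv_smul_smul₀ h2] at this
  · apply top_of_t
    have := W.smul_mem (a + b)⁻¹ m1
    rwa [inv_smul_smul₀ h1] at this
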